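/- arXiv:2510.20802 — 2 statements merged into one kernel-verified Lean document; each statement's English description precedes it below -/
import Mathlib

section
/- If G is a long-refinement graph on n ≥ 2 vertices, then in every non-stable partition π^i produced by Colour Refinement on G there is exactly one class C ∈ π^i that is unbalanced, i.e., exactly one class C such that there exists a class C' ∈ π^i with deg_{C'}(C) undefined (vertices of C have differing numbers of neighbours in C'). -/
variable {V : Type*}

/-- Colour Refinement equivalence: `crRel G i u v` means `u` and `v` get the same colour
after `i` iterations of Colour Refinement on `G` (starting monochromatic). -/
def crRel (G : SimpleGraph V) : ℕ → V → V → Prop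
  | 0 => fun _ _ => True
  | (i+1) => fun u v => crRel G i u v ∧ ∀ w : V,
      Nat.card {x : V // G.Adj u x ∧ crRel G i x w} =
      Nat.card {x : V // G.Adj v x ∧ crRel G i x w}

/-- The colour class of `v` after `i` iterations. -/
def crClass (G : SimpleGraph V) (i : ℕ) (v : V) : Set V :=
  {u : V | crRel G i u v}

/-- The partition `π^i` induced by the colouring after `i` iterations. -/
def crPartition (G : SimpleGraph V) (i : ℕ) : Set (Set V) :=
  {C : Set V | ∃ v : V, C = crClass G i v}

/-- `G` is a long-refinement graph: Colour Refinement takes exactly `n - 1` iterations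
to stabilise. -/
def IsLongRefinement [Fintype V] (G : SimpleGraph V) : Prop :=
  (∀ i < Fintype.card V - 1, crPartition G (i+1) ≠ crPartition G i) ∧
  crPartition G (Fintype.card V) = crPartition G (Fintype.card V - 1)

/-- The degree of a vertex. -/
noncomputable def vdeg (G : SimpleGraph V) (v : V) : ℕ :=
  Nat.card {u : V // G.Adj v u}

/-- `degOn G C C' k` : every vertex of `C` has exactly `k` neighbours in `C'`,
i.e. `deg_{C'}(C) = k`. -/
def degOn (G : SimpleGraph V) (C C' : Set V) (k : ℕ) : Prop :=
  ∀ v ∈ C, Nat.card {x : V // x ∈ C' ∧ G.Adj v x} = k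

/-- `C` is balanced with respect to `C'`: `deg_{C'}(C)` is defined. -/
def BalancedWrt (G : SimpleGraph V) (C C' : Set V) : Prop :=
  ∃ k, degOn G C C' k

/-!
Colour Refinement only ever splits colour classes, and a class splits in the next iteration
exactly when it is unbalanced towards some class. Every split class contributes at least one new
colour, so the number of colours grows by at least the number of split classes. Starting from one
colour and never exceeding `n`, the `n - 1` non-stable iterations of a long-refinement graph
therefore each add exactly one colour, which leaves room for only one split class per iteration.
-/

theorem Function.Surjective.card_add_ncard_le {α β : Type*} [Finite α] {f : α → β}
    (hf : f.Surjective) {S : Set β} (hS : ∀ b ∈ S, (f ⁻¹' {b}).Nontrivial) :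
    Nat.card β + S.ncard ≤ Nat.card α := by
  -- a section of `f` and a second preimage of each point of `S` give an injection `β ⊕ S → α`
  have : Finite β := .of_surjective f hf
  choose g hg using hf
  choose k hk hkg using fun b : S => (hS b b.2).exists_ne (g b)
  have hinj : (Sum.elim g k).Injective := by
    rintro (b | b) (b' | b') h
    · exact congrArg Sum.inl ((hg b).symm.trans ((congrArg f h).trans (hg b')))
    · have hb : b = b' := (hg b).symm.trans ((congrArg f h).trans (hk b'))
      exact absurd (h.symm.trans (congrArg g hb)) (hkg b')
    · have hb : b' = b := (hg b').symm.trans ((congrArg f h).symm.trans (hk b))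
      exact absurd (h.trans (congrArg g hb)) (hkg b)
    · exact congrArg Sum.inr (Subtype.ext ((hk b).symm.trans ((congrArg f h).trans (hk b'))))
  calc Nat.card β + S.ncard = Nat.card (β ⊕ S) := by rw [Nat.card_sum, Nat.card_coe_set_eq]
    _ ≤ Nat.card α := Nat.card_le_card_of_injective _ hinj

section ColourRefinement

variable {G : SimpleGraph V}

variable (G) in
theorem crRel_equivalence : ∀ i, Equivalence (crRel G i)
  | 0 => ⟨fun _ => trivial, fun _ => trivial, fun _ _ => trivial⟩
  | i + 1 =>
    have e := crRel_equivalence i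
    ⟨fun v => ⟨e.refl v, fun _ => rfl⟩, fun h => ⟨e.symm h.1, fun w => (h.2 w).symm⟩,
      fun h₁ h₂ => ⟨e.trans h₁.1 h₂.1, fun w => (h₁.2 w).trans (h₂.2 w)⟩⟩

variable (G) in
def crSetoid (i : ℕ) : Setoid V := ⟨crRel G i, crRel_equivalence G i⟩

theorem crPartition_eq_iff {i j : ℕ} :
    crPartition G i = crPartition G j ↔ crRel G i = crRel G j := by
  change (crSetoid G i).classes = (crSetoid G j).classes ↔ _
  rw [← Setoid.classes_inj]
  refine ⟨fun h => ?_, fun h => Setoid.ext fun a b => ?_⟩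
  · funext a b
    exact propext (Setoid.ext_iff.1 h a b)
  · change crRel G i a b ↔ crRel G j a b
    rw [h]

theorem crRel_succ_succ_eq {i : ℕ} (h : crRel G (i + 1) = crRel G i) :
    crRel G (i + 2) = crRel G (i + 1) := by
  conv_lhs => unfold crRel; rw [h]
  rfl

theorem crRel_succ_eq_of_le {i j : ℕ} (h : crRel G (i + 1) = crRel G i) (hij : i ≤ j) :
    crRel G (j + 1) = crRel G j := by
  induction j, hij using Nat.le_induction with
  | base => exact h
  | succ j _ ih => exact crRel_succ_succ_eq ih

theorem crClass_eq_of_crRel {i : ℕ} {u v : V} (h : crRel G i u v) :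
    crClass G i u = crClass G i v :=
  let e := crRel_equivalence G i
  Set.ext fun _ => ⟨fun hx => e.trans hx h, fun hx => e.trans hx (e.symm h)⟩

variable (G) in
def SplitsAt (i : ℕ) (u : V) : Prop :=
  ∃ v, crRel G i u v ∧ ¬ crRel G (i + 1) u v

theorem exists_splitsAt_of_crRel_succ_ne {i : ℕ} (h : crRel G (i + 1) ≠ crRel G i) :
    ∃ u, SplitsAt G i u := by
  contrapose! h
  funext u v
  exact propext ⟨And.left, fun huv => not_not.1 fun hsplit => h u ⟨v, huv, hsplit⟩⟩

theorem balancedWrt_crClass_iff {i : ℕ} {u w : V} :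
    BalancedWrt G (crClass G i u) (crClass G i w) ↔
      ∀ v, crRel G i v u → Nat.card {x // G.Adj v x ∧ crRel G i x w} =
        Nat.card {x // G.Adj u x ∧ crRel G i x w} := by
  have hcard : ∀ v, Nat.card {x // x ∈ crClass G i w ∧ G.Adj v x} =
      Nat.card {x // G.Adj v x ∧ crRel G i x w} :=
    fun v => Nat.card_congr (Equiv.subtypeEquivRight fun _ => and_comm)
  simp only [BalancedWrt, degOn, hcard]
  exact ⟨fun ⟨k, hk⟩ v hv => (hk v hv).trans (hk u ((crRel_equivalence G i).refl u)).symm,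
    fun h => ⟨_, h⟩⟩

theorem exists_not_balancedWrt_iff {i : ℕ} {u : V} :
    (∃ C' ∈ crPartition G i, ¬ BalancedWrt G (crClass G i u) C') ↔ SplitsAt G i u := by
  constructor
  · rintro ⟨_, ⟨w, rfl⟩, hw⟩
    rw [balancedWrt_crClass_iff] at hw
    simp only [not_forall] at hw
    obtain ⟨v, hvu, hne⟩ := hw
    exact ⟨v, (crRel_equivalence G i).symm hvu, fun huv => hne (huv.2 w).symm⟩
  · rintro ⟨v, huv, hsplit⟩
    obtain ⟨w, hw⟩ : ∃ w, Nat.card {x // G.Adj u x ∧ crRel G i x w} ≠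
        Nat.card {x // G.Adj v x ∧ crRel G i x w} := by
      by_contra! h
      exact hsplit ⟨huv, h⟩
    refine ⟨crClass G i w, ⟨w, rfl⟩, fun hb => hw ?_⟩
    exact (balancedWrt_crClass_iff.1 hb v ((crRel_equivalence G i).symm huv)).symm

variable (G) in
noncomputable def numColours (i : ℕ) : ℕ :=
  Nat.card (Quotient (crSetoid G i))

theorem numColours_le [Finite V] (i : ℕ) : numColours G i ≤ Nat.card V :=
  Nat.card_le_card_of_surjective _ Quotient.mk_surjective

theorem numColours_pos [Finite V] [Nonempty V] (i : ℕ) : 0 < numColours G i :=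
  Nat.card_pos_iff.2 ⟨⟨⟦Classical.arbitrary V⟧⟩, inferInstance⟩

variable (G) in
def splittingColours (i : ℕ) : Set (Quotient (crSetoid G i)) :=
  Quotient.mk _ '' {u | SplitsAt G i u}

theorem numColours_add_ncard_splittingColours_le [Finite V] (i : ℕ) :
    numColours G i + (splittingColours G i).ncard ≤ numColours G (i + 1) := by
  have hle : crSetoid G (i + 1) ≤ crSetoid G i := fun _ _ h => h.1
  refine Function.Surjective.card_add_ncard_le (f := Setoid.map_of_le hle)
    (Quotient.ind fun u => ⟨⟦u⟧, rfl⟩) ?_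
  rintro _ ⟨u, ⟨v, huv, hsplit⟩, rfl⟩
  refine ⟨⟦u⟧, rfl, ⟦v⟧, Quotient.sound ((crRel_equivalence G i).symm huv), ?_⟩
  exact fun h => hsplit (Quotient.exact h)

theorem numColours_add_le [Finite V] {i j : ℕ}
    (hne : ∀ k, i ≤ k → k < j → crRel G (k + 1) ≠ crRel G k) (hij : i ≤ j) :
    numColours G i + (j - i) ≤ numColours G j := by
  induction j, hij using Nat.le_induction with
  | base => simp
  | succ j hij ih =>
    obtain ⟨u, hu⟩ := exists_splitsAt_of_crRel_succ_ne (hne j hij (Nat.lt_succ_self j))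
    have hsplit : 0 < (splittingColours G j).ncard := (Set.ncard_pos).2 ⟨_, u, hu, rfl⟩
    have := numColours_add_ncard_splittingColours_le (G := G) j
    have := ih fun k hik hkj => hne k hik (hkj.trans (Nat.lt_succ_self j))
    omega

end ColourRefinement

section LongRefinement

variable [Fintype V] {G : SimpleGraph V}

theorem IsLongRefinement.crRel_succ_ne (h : IsLongRefinement G) {i : ℕ}
    (hi : i < Fintype.card V - 1) : crRel G (i + 1) ≠ crRel G i :=
  fun heq => h.1 i hi (crPartition_eq_iff.2 heq)

theorem IsLongRefinement.lt_of_splitsAt (h : IsLongRefinement G) {i : ℕ} {u : V}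
    (hu : SplitsAt G i u) : i < Fintype.card V - 1 := by
  have hpos : 0 < Fintype.card V := Fintype.card_pos_iff.2 ⟨u⟩
  by_contra! hle
  have hstab : crRel G (Fintype.card V - 1 + 1) = crRel G (Fintype.card V - 1) := by
    rw [← crPartition_eq_iff, Nat.sub_add_cancel hpos]
    exact h.2
  obtain ⟨v, huv, hsplit⟩ := hu
  exact hsplit (by rwa [crRel_succ_eq_of_le hstab hle])

theorem IsLongRefinement.ncard_splittingColours_le_one [Nonempty V] (h : IsLongRefinement G)
    {i : ℕ} (hi : i < Fintype.card V - 1) :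
    (splittingColours G i).ncard ≤ 1 := by
  -- `1 + i + #(splittingColours G i) + (n - 2 - i) ≤ numColours G (n - 1) ≤ n`
  have h₀ := numColours_pos (G := G) 0
  have h₁ := numColours_add_le (fun k _ hk => h.crRel_succ_ne (hk.trans hi)) (Nat.zero_le i)
  have h₂ := numColours_add_ncard_splittingColours_le (G := G) i
  have h₃ := numColours_add_le (i := i + 1) (fun k _ hk => h.crRel_succ_ne hk) hi
  have h₄ := numColours_le (G := G) (Fintype.card V - 1)
  rw [Nat.card_eq_fintype_card] at h₄
  omega

theorem IsLongRefinement.crRel_of_splitsAt (h : IsLongRefinement G) {i : ℕ} {u u' : V}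
    (hu : SplitsAt G i u) (hu' : SplitsAt G i u') : crRel G i u u' := by
  have : Nonempty V := ⟨u⟩
  have hsub := Set.ncard_le_one_iff_subsingleton.1
    (h.ncard_splittingColours_le_one (h.lt_of_splitsAt hu))
  exact Quotient.exact (hsub ⟨u, hu, rfl⟩ ⟨u', hu', rfl⟩)

end LongRefinement

theorem longRefinement_unique_unbalanced_general [Fintype V] (G : SimpleGraph V)
    (h : IsLongRefinement G) (i : ℕ)
    (hns : crPartition G (i+1) ≠ crPartition G i) :
    ∃! C, C ∈ crPartition G i ∧ ∃ C' ∈ crPartition G i, ¬ BalancedWrt G C C' := by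
  obtain ⟨u, hu⟩ := exists_splitsAt_of_crRel_succ_ne (mt crPartition_eq_iff.2 hns)
  refine ⟨crClass G i u, ⟨⟨u, rfl⟩, exists_not_balancedWrt_iff.2 hu⟩, ?_⟩
  rintro _ ⟨⟨u', rfl⟩, hu'⟩
  exact crClass_eq_of_crRel (h.crRel_of_splitsAt (exists_not_balancedWrt_iff.1 hu') hu)

/-- In a long-refinement graph, every non-stable partition `π^i` has exactly one
unbalanced class. -/
theorem longRefinement_unique_unbalanced [Fintype V] (G : SimpleGraph V)
    (h : IsLongRefinement G) (hn : 2 ≤ Fintype.card V) (i : ℕ)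
    (hns : crPartition G (i+1) ≠ crPartition G i) :
    ∃! C, C ∈ crPartition G i ∧ ∃ C' ∈ crPartition G i, ¬ BalancedWrt G C C' :=
  longRefinement_unique_unbalanced_general G h i hns
end

section
/- Let G be a long-refinement graph, p the minimal iteration with all classes of π^p of size at most 2, P_1 the first pair to split, and P_a, P_b (with 1 < a < b) the two pairs into which C_{p-1} splits in iteration p. Then there exists a vertex u ∈ P_1 such that u is adjacent to both vertices of P_a and to neither vertex of P_b, while the other vertex of P_1 is adjacent to both vertices of P_b and to neither vertex of P_a. -/
variable {V : Type*}

/-!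
In a long-refinement graph the number of colour classes grows from `1` to at most `n` in
`n - 1` strictly increasing steps, so every iteration creates exactly one new class: in
iteration `p` only `C = A ∪ B` splits. Two vertices of a class of size at most two have
equally many neighbours in it and in `C`, hence in the other half too, so `A` and `B` are
stable and `P₁ = {u, y}` is a class of `π^{p-1}`. Then `P₁` can only be split by `A` and `B`,
and all vertices of `A` have the same number `α` of neighbours in `P₁`. Double counting gives
`|A| α = deg_A(u) + deg_A(y)`, which together with `deg_A(u) ≠ deg_A(y)` and `|A| ≤ 2` forces
`{deg_A(u), deg_A(y)} = {0, |A|}`; likewise for `B`, and `deg_C(u) = deg_C(y)` fixes the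
orientation.
-/

noncomputable def degIn (G : SimpleGraph V) (v : V) (S : Set V) : ℕ :=
  (G.neighborSet v ∩ S).ncard

section Degrees

variable (G : SimpleGraph V)

theorem degIn_pair_comm (u v : V) : degIn G u {u, v} = degIn G v {u, v} := by
  classical
  have key : ∀ a b : V, degIn G a {a, b} = if G.Adj a b then 1 else 0 := by
    intro a b
    rw [degIn, Set.inter_insert_of_notMem (s := G.neighborSet a) G.irrefl]
    split_ifs with hab
    · rw [Set.inter_singleton_of_mem (s := G.neighborSet a) hab, Set.ncard_singleton]
    · rw [(Set.inter_singleton_eq_empty (s := G.neighborSet a)).2 hab, Set.ncard_empty]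
  rw [key, Set.pair_comm, key, G.adj_comm]

theorem sum_degIn_comm (s t : Finset V) :
    ∑ v ∈ s, degIn G v t = ∑ w ∈ t, degIn G w s := by
  classical
  have hcard : ∀ (a : V) (r : Finset V),
      degIn G a r = ∑ x ∈ r, if G.Adj a x then 1 else 0 := by
    intro a r
    rw [degIn, ← Finset.card_filter, ← Set.ncard_coe_finset, Finset.coe_filter]
    congr 1
    ext x
    simp [and_comm]
  simp only [hcard]
  rw [Finset.sum_comm]
  simp only [G.adj_comm]

variable [Finite V]

theorem degIn_le_ncard (v : V) (S : Set V) : degIn G v S ≤ S.ncard :=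
  Set.ncard_le_ncard Set.inter_subset_right

theorem degIn_union {v : V} {S T : Set V} (h : Disjoint S T) :
    degIn G v (S ∪ T) = degIn G v S + degIn G v T := by
  rw [degIn, Set.inter_union_distrib_left,
    Set.ncard_union_eq (h.mono Set.inter_subset_right Set.inter_subset_right)]
  rfl

theorem degIn_eq_ncard_iff {v : V} {S : Set V} :
    degIn G v S = S.ncard ↔ ∀ x ∈ S, G.Adj v x := by
  change _ ↔ S ⊆ G.neighborSet v
  rw [← Set.inter_eq_right]
  refine ⟨fun h => Set.eq_of_subset_of_ncard_le Set.inter_subset_right h.ge, fun h => ?_⟩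
  rw [degIn, h]

theorem degIn_eq_zero_iff {v : V} {S : Set V} : degIn G v S = 0 ↔ ∀ x ∈ S, ¬ G.Adj v x := by
  rw [degIn, Set.ncard_eq_zero, Set.eq_empty_iff_forall_notMem]
  simp only [Set.mem_inter_iff, SimpleGraph.mem_neighborSet, not_and]
  exact ⟨fun h x hx hadj => h x hadj hx, fun h x hadj hx => h x hx hadj⟩

theorem degIn_eq_of_ncard_le_two {S : Set V} (hS : S.ncard ≤ 2) {a b : V} (ha : a ∈ S)
    (hb : b ∈ S) : degIn G a S = degIn G b S := by
  obtain rfl | hab := eq_or_ne a b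
  · rfl
  rw [← Set.eq_of_subset_of_ncard_le (Set.pair_subset ha hb) (by rwa [Set.ncard_pair hab])]
  exact degIn_pair_comm G a b

theorem degIn_dichotomy_of_ncard_le_two {D : Set V} {u y : V} (huy : u ≠ y) (hD : D.ncard ≤ 2)
    (hreg : ∀ v ∈ D, ∀ w ∈ D, degIn G v {u, y} = degIn G w {u, y})
    (hne : degIn G u D ≠ degIn G y D) :
    degIn G u D = D.ncard ∧ degIn G y D = 0 ∨ degIn G u D = 0 ∧ degIn G y D = D.ncard := by
  classical
  obtain ⟨v, hv⟩ : D.Nonempty := by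
    rw [Set.nonempty_iff_ne_empty]
    rintro rfl
    simp [degIn] at hne
  have hfin := D.toFinite
  have hcount : D.ncard * degIn G v {u, y} = degIn G u D + degIn G y D := by
    calc D.ncard * degIn G v {u, y}
        = ∑ w ∈ hfin.toFinset, degIn G w ↑({u, y} : Finset V) := by
          rw [Finset.sum_const_nat fun w hw => ?_, Set.ncard_eq_toFinset_card D hfin]
          push_cast
          exact hreg w ((Set.Finite.mem_toFinset hfin).1 hw) v hv
      _ = ∑ w ∈ ({u, y} : Finset V), degIn G w ↑hfin.toFinset := sum_degIn_comm G _ _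
      _ = degIn G u D + degIn G y D := by rw [Finset.sum_pair huy, Set.Finite.coe_toFinset]
  have hα : degIn G v {u, y} ≤ 2 := (degIn_le_ncard G v _).trans (Set.ncard_pair huy).le
  have hu := degIn_le_ncard G u D
  have hy := degIn_le_ncard G y D
  interval_cases D.ncard <;> omega

theorem exists_complete_anticomplete_of_degIn_ne {A B : Set V} {u y : V} (huy : u ≠ y)
    (hA : A.ncard ≤ 2) (hB : B.ncard ≤ 2)
    (hregA : ∀ a ∈ A, ∀ a' ∈ A, degIn G a {u, y} = degIn G a' {u, y})
    (hregB : ∀ b ∈ B, ∀ b' ∈ B, degIn G b {u, y} = degIn G b' {u, y})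
    (hsplit : degIn G u A ≠ degIn G y A)
    (hsum : degIn G u A + degIn G u B = degIn G y A + degIn G y B) :
    ∃ z ∈ ({u, y} : Set V), (∀ x ∈ A, G.Adj z x) ∧ (∀ x ∈ B, ¬ G.Adj z x) ∧
      ∀ w ∈ ({u, y} : Set V), w ≠ z →
        (∀ x ∈ B, G.Adj w x) ∧ (∀ x ∈ A, ¬ G.Adj w x) := by
  have hsplitB : degIn G u B ≠ degIn G y B := by omega
  rcases degIn_dichotomy_of_ncard_le_two G huy hA hregA hsplit with
    ⟨huA, hyA⟩ | ⟨huA, hyA⟩ <;>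
  rcases degIn_dichotomy_of_ncard_le_two G huy hB hregB hsplitB with
    ⟨huB, hyB⟩ | ⟨huB, hyB⟩
  -- one vertex complete to both `A` and `B`: `hsum` forces `A = ∅`, contradicting `hsplit`
  · omega
  · refine ⟨u, .inl rfl, (degIn_eq_ncard_iff G).1 huA, (degIn_eq_zero_iff G).1 huB, ?_⟩
    rintro w (rfl | rfl) hw
    · exact absurd rfl hw
    · exact ⟨(degIn_eq_ncard_iff G).1 hyB, (degIn_eq_zero_iff G).1 hyA⟩
  · refine ⟨y, .inr rfl, (degIn_eq_ncard_iff G).1 hyA, (degIn_eq_zero_iff G).1 hyB, ?_⟩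
    rintro w (rfl | rfl) hw
    · exact ⟨(degIn_eq_ncard_iff G).1 huB, (degIn_eq_zero_iff G).1 huA⟩
    · exact absurd rfl hw
  · omega

end Degrees

section ColourRefinement

variable {G : SimpleGraph V} {i : ℕ}

variable (G) in
theorem crRel_refl (i : ℕ) (v : V) : crRel G i v v := by
  induction i with
  | zero => trivial
  | succ i ih => exact ⟨ih, fun _ => rfl⟩

theorem crRel_symm {u v : V} (h : crRel G i u v) : crRel G i v u := by
  induction i with
  | zero => trivial
  | succ i ih => exact ⟨ih h.1, fun w => (h.2 w).symm⟩

theorem crRel_trans {u v w : V} (h₁ : crRel G i u v) (h₂ : crRel G i v w) : crRel G i u w := by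
  induction i with
  | zero => trivial
  | succ i ih => exact ⟨ih h₁.1 h₂.1, fun x => (h₁.2 x).trans (h₂.2 x)⟩

variable (G) in
theorem mem_crClass_self (i : ℕ) (v : V) : v ∈ crClass G i v :=
  crRel_refl G i v

variable (G) in
theorem crClass_mem_crPartition (i : ℕ) (v : V) : crClass G i v ∈ crPartition G i :=
  ⟨v, rfl⟩

variable (G) in
theorem crClass_succ_subset (i : ℕ) (v : V) : crClass G (i + 1) v ⊆ crClass G i v :=
  fun _ hx => hx.1

theorem crClass_eq_crClass_iff {u v : V} : crClass G i u = crClass G i v ↔ crRel G i u v :=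
  ⟨fun h => (h ▸ mem_crClass_self G i u : u ∈ crClass G i v), fun h => Set.ext fun _ =>
    ⟨fun hx => crRel_trans hx h, fun hx => crRel_trans hx (crRel_symm h)⟩⟩

theorem eq_crClass_of_mem {D : Set V} (hD : D ∈ crPartition G i) {v : V} (hv : v ∈ D) :
    D = crClass G i v := by
  obtain ⟨w, rfl⟩ := hD
  exact (crClass_eq_crClass_iff.2 hv).symm

theorem nonempty_of_mem_crPartition {D : Set V} (hD : D ∈ crPartition G i) : D.Nonempty := by
  obtain ⟨v, rfl⟩ := hD
  exact ⟨v, mem_crClass_self G i v⟩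

theorem crRel_of_mem {D : Set V} (hD : D ∈ crPartition G i) {u v : V} (hu : u ∈ D)
    (hv : v ∈ D) : crRel G i u v := by
  rw [eq_crClass_of_mem hD hv] at hu
  exact hu

theorem disjoint_of_mem_crPartition {D E : Set V} (hD : D ∈ crPartition G i)
    (hE : E ∈ crPartition G i) (hne : D ≠ E) : Disjoint D E :=
  Set.disjoint_left.2 fun _ hvD hvE =>
    hne ((eq_crClass_of_mem hD hvD).trans (eq_crClass_of_mem hE hvE).symm)

theorem crRel_succ_iff_degIn {u v : V} :
    crRel G (i + 1) u v ↔
      crRel G i u v ∧ ∀ E ∈ crPartition G i, degIn G u E = degIn G v E := by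
  have hcard : ∀ x w : V,
      Nat.card {y // G.Adj x y ∧ crRel G i y w} = degIn G x (crClass G i w) :=
    fun x w => Nat.card_coe_set_eq _
  simp only [crRel, hcard, crPartition, Set.mem_ofPred_eq, forall_exists_index,
    forall_eq_apply_imp_iff]

theorem degIn_eq_of_crRel_succ {u v : V} (h : crRel G (i + 1) u v) {E : Set V}
    (hE : E ∈ crPartition G i) : degIn G u E = degIn G v E :=
  (crRel_succ_iff_degIn.1 h).2 E hE

/-- For `D ∈ π^{i+1}` this is the class of `π^i` containing `D`. -/
def crParent (G : SimpleGraph V) (i : ℕ) (D : Set V) : Set V :=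
  ⋃ v ∈ D, crClass G i v

theorem crParent_crClass_succ (v : V) : crParent G i (crClass G (i + 1) v) = crClass G i v := by
  ext x
  simp only [crParent, Set.mem_iUnion, exists_prop]
  exact ⟨fun ⟨_, hw, hx⟩ => crRel_trans hx hw.1,
    fun hx => ⟨v, mem_crClass_self G _ v, hx⟩⟩

theorem crParent_of_mem {D : Set V} (hD : D ∈ crPartition G (i + 1)) {v : V} (hv : v ∈ D) :
    crParent G i D = crClass G i v := by
  rw [eq_crClass_of_mem hD hv, crParent_crClass_succ]

theorem image_crParent : crParent G i '' crPartition G (i + 1) = crPartition G i := by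
  ext E
  constructor
  · rintro ⟨_, ⟨v, rfl⟩, rfl⟩
    exact ⟨v, crParent_crClass_succ v⟩
  · rintro ⟨v, rfl⟩
    exact ⟨_, crClass_mem_crPartition G _ v, crParent_crClass_succ v⟩

theorem exists_sibling_of_notMem {D : Set V} (hD : D ∈ crPartition G (i + 1))
    (hD' : D ∉ crPartition G i) :
    ∃ D' ∈ crPartition G (i + 1), D' ≠ D ∧ crParent G i D' = crParent G i D := by
  obtain ⟨v, rfl⟩ := hD
  have hssub : crClass G (i + 1) v ⊂ crClass G i v :=
    (crClass_succ_subset G i v).ssubset_of_ne fun h => hD' (h ▸ crClass_mem_crPartition G i v)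
  obtain ⟨w, hw, hwv⟩ := Set.exists_of_ssubset hssub
  refine ⟨crClass G (i + 1) w, crClass_mem_crPartition G _ w,
    fun h => hwv (h ▸ mem_crClass_self G _ w), ?_⟩
  rw [crParent_crClass_succ, crParent_crClass_succ, crClass_eq_crClass_iff.2 hw]

theorem ncard_crPartition_zero [Nonempty V] : (crPartition G 0).ncard = 1 := by
  have : crPartition G 0 = {Set.univ} := by
    ext D
    simp [crPartition, crClass, crRel]
  rw [this, Set.ncard_singleton]

variable [Finite V]

theorem ncard_crPartition_le_card : (crPartition G i).ncard ≤ Nat.card V := by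
  have : crPartition G i = crClass G i '' Set.univ := by
    ext D
    simp [crPartition, eq_comm]
  rw [this]
  exact (Set.ncard_image_le (Set.toFinite _)).trans_eq (Set.ncard_univ V)

variable (G) in
theorem ncard_crPartition_le_succ (i : ℕ) :
    (crPartition G i).ncard ≤ (crPartition G (i + 1)).ncard := by
  rw [← image_crParent (i := i)]
  exact Set.ncard_image_le

theorem ncard_crPartition_lt_succ (hne : crPartition G (i + 1) ≠ crPartition G i) :
    (crPartition G i).ncard < (crPartition G (i + 1)).ncard := by
  obtain ⟨D, hD, hD'⟩ : ∃ D ∈ crPartition G (i + 1), D ∉ crPartition G i := by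
    by_contra! hsub
    refine hne (Set.Subset.antisymm hsub ?_)
    rintro _ ⟨v, rfl⟩
    have hv := eq_crClass_of_mem (hsub _ (crClass_mem_crPartition G _ v)) (mem_crClass_self G _ v)
    exact hv ▸ crClass_mem_crPartition G (i + 1) v
  obtain ⟨D', hD'mem, hD'D, hpar⟩ := exists_sibling_of_notMem hD hD'
  rw [← image_crParent (i := i)]
  exact (Set.ncard_image_le (Set.toFinite _)).lt_of_ne fun h =>
    hD'D (Set.injOn_of_ncard_image_eq h (Set.toFinite _) hD'mem hD hpar)

theorem exists_eq_pair_of_notMem_crPartition_succ {D : Set V}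
    (hD : D ∈ crPartition G i) (hD2 : D.ncard ≤ 2) (hD' : D ∉ crPartition G (i + 1)) :
    ∃ u y, D = {u, y} ∧ u ≠ y ∧ crRel G i u y ∧ ¬ crRel G (i + 1) u y := by
  obtain ⟨u, rfl⟩ := hD
  obtain ⟨y, hy, hsplit⟩ : ∃ y ∈ crClass G i u, ¬ crRel G (i + 1) u y := by
    by_contra! hall
    exact hD' ⟨u, Set.Subset.antisymm (fun y hy => crRel_symm (hall y hy))
      (crClass_succ_subset G i u)⟩
  have huy : u ≠ y := by
    rintro rfl
    exact hsplit (crRel_refl G _ u)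
  refine ⟨u, y, ?_, huy, crRel_symm hy, hsplit⟩
  exact (Set.eq_of_subset_of_ncard_le (Set.pair_subset (mem_crClass_self G i u) hy)
    (by rwa [Set.ncard_pair huy])).symm

end ColourRefinement

section LongRefinement

variable {G : SimpleGraph V}

theorem IsLongRefinement.add_le_ncard_crPartition [Fintype V] (h : IsLongRefinement G)
    {i j : ℕ} (hij : i ≤ j) (hj : j ≤ Fintype.card V - 1) :
    (crPartition G i).ncard + (j - i) ≤ (crPartition G j).ncard := by
  induction j, hij using Nat.le_induction with
  | base => simp
  | succ j hij ih =>
    have := ncard_crPartition_lt_succ (h.1 j (by omega))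
    have := ih (by omega)
    omega

theorem IsLongRefinement.ncard_crPartition_succ_le [Fintype V] [Nonempty V]
    (h : IsLongRefinement G) (q : ℕ) :
    (crPartition G (q + 1)).ncard ≤ (crPartition G q).ncard + 1 := by
  have hn : 1 ≤ Fintype.card V := Fintype.card_pos
  have h0 : (crPartition G 0).ncard = 1 := ncard_crPartition_zero
  have hmax : ∀ i, (crPartition G i).ncard ≤ Fintype.card V := fun i =>
    Nat.card_eq_fintype_card (α := V) ▸ ncard_crPartition_le_card
  rcases le_or_gt (q + 1) (Fintype.card V - 1) with hq | hq
  · have := h.add_le_ncard_crPartition (Nat.zero_le q) (by omega)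
    have := h.add_le_ncard_crPartition hq le_rfl
    have := hmax (Fintype.card V - 1)
    omega
  · have := h.add_le_ncard_crPartition (Nat.zero_le _) le_rfl
    have := monotone_nat_of_le_succ (ncard_crPartition_le_succ G)
      (show Fintype.card V - 1 ≤ q by omega)
    have := hmax (q + 1)
    omega

end LongRefinement

section SingleSplit

variable {G : SimpleGraph V} {q : ℕ} {C A B : Set V}

theorem degIn_ne_or_degIn_ne_of_not_crRel_succ
    (hold : ∀ E ∈ crPartition G (q + 1), E ≠ A → E ≠ B → E ∈ crPartition G q)
    {u y : V}
    (hrel : crRel G (q + 1) u y) (hsplit : ¬ crRel G (q + 1 + 1) u y) :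
    degIn G u A ≠ degIn G y A ∨ degIn G u B ≠ degIn G y B := by
  by_contra! hAB
  refine hsplit (crRel_succ_iff_degIn.2 ⟨hrel, fun E hE => ?_⟩)
  by_cases hEA : E = A
  · exact hEA ▸ hAB.1
  by_cases hEB : E = B
  · exact hEB ▸ hAB.2
  exact degIn_eq_of_crRel_succ hrel (hold E hE hEA hEB)

variable [Finite V]

theorem mem_crPartition_of_ne_of_ne
    (hcard : (crPartition G (q + 1)).ncard ≤ (crPartition G q).ncard + 1)
    (hC : C ∈ crPartition G q) (hA : A ∈ crPartition G (q + 1))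
    (hB : B ∈ crPartition G (q + 1))
    (hAB : A ≠ B) (hCAB : C = A ∪ B) {E : Set V} (hE : E ∈ crPartition G (q + 1))
    (hEA : E ≠ A) (hEB : E ≠ B) : E ∈ crPartition G q := by
  by_contra hE'
  obtain ⟨E', hE'mem, hE'E, hpar⟩ := exists_sibling_of_notMem hE hE'
  have hparent : ∀ D ∈ crPartition G (q + 1), D ⊆ C → crParent G q D = C := fun D hD hDC =>
    have ⟨_, hv⟩ := nonempty_of_mem_crPartition hD
    (crParent_of_mem hD hv).trans (eq_crClass_of_mem hC (hDC hv)).symm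
  -- `π^q` is the image of `π^{q+1}` under `crParent`, so `hcard` allows a single pair of
  -- siblings, and `{A, B}` is one.
  rw [← image_crParent (i := q), Set.ncard_le_ncard_image_add_one_iff] at hcard
  have hpairs := hcard A hA B hB E hE E' hE'mem
    ((hparent A hA (hCAB ▸ Set.subset_union_left)).trans
      (hparent B hB (hCAB ▸ Set.subset_union_right)).symm) hpar.symm hAB hE'E.symm
  have hEmem : E ∈ ({A, B} : Set (Set V)) := hpairs ▸ Set.mem_insert E {E'}
  rcases hEmem with rfl | rfl <;> contradiction

theorem mem_crPartition_add_two_of_ncard_le_two (hC : C ∈ crPartition G q)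
    (hA : A ∈ crPartition G (q + 1)) (hCAB : C = A ∪ B) (hA2 : A.ncard ≤ 2)
    (hold : ∀ E ∈ crPartition G (q + 1), E ≠ A → E ≠ B → E ∈ crPartition G q) :
    A ∈ crPartition G (q + 1 + 1) := by
  obtain ⟨a₀, rfl⟩ := hA
  refine ⟨a₀, Set.Subset.antisymm (fun a ha => ?_) (crClass_succ_subset G _ a₀)⟩
  have hdegA := degIn_eq_of_ncard_le_two G hA2 ha (mem_crClass_self G _ a₀)
  refine crRel_succ_iff_degIn.2 ⟨ha, fun E hE => ?_⟩
  by_cases hEA : E = crClass G (q + 1) a₀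
  · exact hEA ▸ hdegA
  by_cases hEB : E = B
  · subst hEB
    have hdisj := disjoint_of_mem_crPartition (crClass_mem_crPartition G _ a₀) hE (Ne.symm hEA)
    have hCdeg := degIn_eq_of_crRel_succ ha hC
    rw [hCAB, degIn_union G hdisj, degIn_union G hdisj] at hCdeg
    omega
  · exact degIn_eq_of_crRel_succ ha (hold E hE hEA hEB)

end SingleSplit

theorem first_pair_attachment_general [Fintype V] (G : SimpleGraph V)
    (h : IsLongRefinement G) (p : ℕ) (hp1 : 1 ≤ p)
    (hp : ∀ C ∈ crPartition G p, C.ncard ≤ 2)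
    (C A B : Set V)
    (hC : C ∈ crPartition G (p-1))
    (hA : A ∈ crPartition G p)
    (hB : B ∈ crPartition G p)
    (hAB : A ≠ B) (hCAB : C = A ∪ B)
    (P1 : Set V) (hP1 : P1 ∈ crPartition G p) (hP1' : P1 ∉ crPartition G (p+1)) :
    ∃ u ∈ P1, (∀ x ∈ A, G.Adj u x) ∧ (∀ x ∈ B, ¬ G.Adj u x) ∧
      ∀ y ∈ P1, y ≠ u → (∀ x ∈ B, G.Adj y x) ∧ (∀ x ∈ A, ¬ G.Adj y x) := by
  obtain ⟨q, rfl⟩ : ∃ q, p = q + 1 := ⟨p - 1, by omega⟩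
  rw [Nat.add_sub_cancel] at hC
  have : Nonempty V := ⟨(nonempty_of_mem_crPartition hC).some⟩
  have hold : ∀ E ∈ crPartition G (q + 1), E ≠ A → E ≠ B → E ∈ crPartition G q :=
    fun E hE => mem_crPartition_of_ne_of_ne (h.ncard_crPartition_succ_le q) hC hA hB hAB hCAB hE
  have hA₂ := mem_crPartition_add_two_of_ncard_le_two hC hA hCAB (hp A hA) hold
  have hB₂ := mem_crPartition_add_two_of_ncard_le_two hC hB (hCAB.trans (Set.union_comm A B))
    (hp B hB) fun E hE hEB hEA => hold E hE hEA hEB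
  have hP1q : P1 ∈ crPartition G q :=
    hold P1 hP1 (by rintro rfl; exact hP1' hA₂) (by rintro rfl; exact hP1' hB₂)
  obtain ⟨u, y, rfl, huy, hrel, hsplit⟩ :=
    exists_eq_pair_of_notMem_crPartition_succ hP1 (hp P1 hP1) hP1'
  have hsum : degIn G u A + degIn G u B = degIn G y A + degIn G y B := by
    have hdisj := disjoint_of_mem_crPartition hA hB hAB
    rw [← degIn_union G hdisj, ← degIn_union G hdisj, ← hCAB]
    exact degIn_eq_of_crRel_succ hrel hC
  have hsplitA : degIn G u A ≠ degIn G y A :=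
    (degIn_ne_or_degIn_ne_of_not_crRel_succ hold hrel hsplit).elim id fun hB => by omega
  exact exists_complete_anticomplete_of_degIn_ne G huy (hp A hA) (hp B hB)
    (fun a ha a' ha' => degIn_eq_of_crRel_succ (crRel_of_mem hA ha ha') hP1q)
    (fun b hb b' hb' => degIn_eq_of_crRel_succ (crRel_of_mem hB hb hb') hP1q) hsplitA hsum

/-- The first pair `P₁` to split is joined to the two pairs `A = P_a` and
`B = P_b` resulting from the split of `C_{p-1}` as follows: one vertex `u` of
`P₁` is complete to `A` and non-adjacent to `B`, while the other vertex of `P₁`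
is complete to `B` and non-adjacent to `A`. -/
theorem first_pair_attachment [Fintype V] (G : SimpleGraph V)
    (h : IsLongRefinement G) (p : ℕ) (hp1 : 1 ≤ p)
    (hp : ∀ C ∈ crPartition G p, C.ncard ≤ 2)
    (hpmin : ∀ q < p, ∃ C ∈ crPartition G q, 2 < C.ncard)
    (C A B : Set V)
    (hC : C ∈ crPartition G (p-1)) (hC' : C ∉ crPartition G p)
    (hA : A ∈ crPartition G p) (hA' : A ∉ crPartition G (p-1))
    (hB : B ∈ crPartition G p) (hB' : B ∉ crPartition G (p-1))
    (hAB : A ≠ B) (hCAB : C = A ∪ B)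
    (P1 : Set V) (hP1 : P1 ∈ crPartition G p) (hP1' : P1 ∉ crPartition G (p+1)) :
    ∃ u ∈ P1, (∀ x ∈ A, G.Adj u x) ∧ (∀ x ∈ B, ¬ G.Adj u x) ∧
      ∀ y ∈ P1, y ≠ u → (∀ x ∈ B, G.Adj y x) ∧ (∀ x ∈ A, ¬ G.Adj y x) :=
  first_pair_attachment_general G h p hp1 hp C A B hC hA hB hAB hCAB P1 hP1 hP1'
end
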